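/- Let 0 < θ < Θ and 𝒜 = {A ∈ S₊ⁿ(ℝ) : √θ ≤ λᵢ(A) ≤ √Θ}. Then for every symmetric n×n real matrix M, sup_{A∈𝒜} trace(Aᵀ M A) = Θ · Σ_{λᵢ(M)>0} λᵢ(M) + θ · Σ_{λᵢ(M)<0} λᵢ(M). -/

import Mathlib

open Matrix

variable {m : Type*} [Fintype m] [DecidableEq m]

lemma psd_diag_nonneg {P : Matrix m m ℝ} (hP : P.PosSemidef) (i : m) : 0 ≤ P i i := by
  exact hP.diag_nonneg

lemma smul_one_diag (a : ℝ) : a • (1 : Matrix m m ℝ) = diagonal (fun _ => a) := by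
  ext i j
  by_cases h : i = j <;> simp [h, Matrix.one_apply]

lemma diag_sub_smul_one (d : m → ℝ) (a : ℝ) :
    diagonal d - a • (1 : Matrix m m ℝ) = diagonal (fun i => d i - a) := by
  rw [smul_one_diag, diagonal_sub]

lemma smul_one_sub_diag (d : m → ℝ) (a : ℝ) :
    a • (1 : Matrix m m ℝ) - diagonal d = diagonal (fun i => a - d i) := by
  rw [smul_one_diag, diagonal_sub]

lemma sq_psd_bounds {A : Matrix m m ℝ} (hA : A.IsHermitian) {a b : ℝ} (ha : 0 ≤ a)
    (hlo : (A - a • (1 : Matrix m m ℝ)).PosSemidef)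
    (hhi : (b • (1 : Matrix m m ℝ) - A).PosSemidef) :
    (A * A - (a ^ 2) • (1 : Matrix m m ℝ)).PosSemidef ∧
      ((b ^ 2) • (1 : Matrix m m ℝ) - A * A).PosSemidef := by
  set V : Matrix m m ℝ := (hA.eigenvectorUnitary : Matrix m m ℝ) with hVdef
  set e : m → ℝ := hA.eigenvalues with hedef
  have hV1 : star V * V = 1 := mem_unitaryGroup_iff'.mp hA.eigenvectorUnitary.2
  have hV2 : V * star V = 1 := mem_unitaryGroup_iff.mp hA.eigenvectorUnitary.2
  have hdiag : star V * A * V = diagonal e := by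
    simpa [RCLike.ofReal_real_eq_id, Unitary.conjStarAlgAut_apply] using
      hA.conjStarAlgAut_star_eigenvectorUnitary
  have hspec : A = V * diagonal e * star V := by
    simpa [RCLike.ofReal_real_eq_id] using hA.spectral_theorem
  have hconj : ∀ (c : ℝ), star V * (A - c • (1 : Matrix m m ℝ)) * V
      = diagonal (fun i => e i - c) := by
    intro c
    have : star V * (A - c • (1 : Matrix m m ℝ)) * V
        = star V * A * V - c • (star V * V) := by
      simp [Matrix.mul_sub, Matrix.sub_mul, mul_smul_comm, smul_mul_assoc]
    rw [this, hV1, hdiag, diag_sub_smul_one]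
  have hconj' : ∀ (c : ℝ), star V * (c • (1 : Matrix m m ℝ) - A) * V
      = diagonal (fun i => c - e i) := by
    intro c
    have : star V * (c • (1 : Matrix m m ℝ) - A) * V
        = c • (star V * V) - star V * A * V := by
      simp [Matrix.mul_sub, Matrix.sub_mul, mul_smul_comm, smul_mul_assoc]
    rw [this, hV1, hdiag, smul_one_sub_diag]
  have hlo' : ∀ i, a ≤ e i := by
    intro i
    have h1 := (hlo.conjTranspose_mul_mul_same V)
    rw [show Vᴴ = star V from rfl, hconj a, posSemidef_diagonal_iff] at h1
    linarith [h1 i]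
  have hhi' : ∀ i, e i ≤ b := by
    intro i
    have h1 := (hhi.conjTranspose_mul_mul_same V)
    rw [show Vᴴ = star V from rfl, hconj' b, posSemidef_diagonal_iff] at h1
    linarith [h1 i]
  have hsq : A * A = V * diagonal (fun i => e i * e i) * star V := by
    conv_lhs => rw [hspec]
    rw [← diagonal_mul_diagonal]
    simp only [Matrix.mul_assoc]
    rw [← Matrix.mul_assoc (star V) V, hV1, Matrix.one_mul]
  constructor
  · have key : (V * diagonal (fun i => e i * e i - a ^ 2) * star V).PosSemidef := by
      have : PosSemidef (diagonal (fun i => e i * e i - a ^ 2)) := by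
        rw [posSemidef_diagonal_iff]
        intro i
        nlinarith [hlo' i, hhi' i]
      simpa [Matrix.star_eq_conjTranspose] using this.mul_mul_conjTranspose_same V
    have heq : V * diagonal (fun i => e i * e i - a ^ 2) * star V
        = A * A - (a ^ 2) • (1 : Matrix m m ℝ) := by
      rw [← diag_sub_smul_one, Matrix.mul_sub, Matrix.sub_mul, hsq]
      simp [mul_smul_comm, smul_mul_assoc, hV2]
    rwa [heq] at key
  · have key : (V * diagonal (fun i => b ^ 2 - e i * e i) * star V).PosSemidef := by
      have : PosSemidef (diagonal (fun i => b ^ 2 - e i * e i)) := by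
        rw [posSemidef_diagonal_iff]
        intro i
        nlinarith [hlo' i, hhi' i]
      simpa [Matrix.star_eq_conjTranspose] using this.mul_mul_conjTranspose_same V
    have heq : V * diagonal (fun i => b ^ 2 - e i * e i) * star V
        = (b ^ 2) • (1 : Matrix m m ℝ) - A * A := by
      rw [← smul_one_sub_diag, Matrix.mul_sub, Matrix.sub_mul, hsq]
      simp [mul_smul_comm, smul_mul_assoc, hV2]
    rwa [heq] at key

/-- Pucci extremal operator as a supremum:
for `0 < θ < Θ` and `𝒜 = {A symmetric : √θ I ≤ A ≤ √Θ I}`,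
`sup_{A∈𝒜} trace(AᵀMA) = Θ Σ_{λᵢ(M)>0} λᵢ(M) + θ Σ_{λᵢ(M)<0} λᵢ(M)`. -/
theorem pucci_sup (n : ℕ) (θ Θ : ℝ) (hθ : 0 < θ) (hθΘ : θ < Θ)
    (M : Matrix (Fin n) (Fin n) ℝ) (hM : M.IsHermitian) :
    sSup {x : ℝ | ∃ A : Matrix (Fin n) (Fin n) ℝ, A.IsHermitian ∧
        (A - Real.sqrt θ • (1 : Matrix (Fin n) (Fin n) ℝ)).PosSemidef ∧
        (Real.sqrt Θ • (1 : Matrix (Fin n) (Fin n) ℝ) - A).PosSemidef ∧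
        x = (Aᵀ * M * A).trace}
      = Θ * ∑ i ∈ Finset.univ.filter (fun i => 0 < hM.eigenvalues i), hM.eigenvalues i
        + θ * ∑ i ∈ Finset.univ.filter (fun i => hM.eigenvalues i < 0), hM.eigenvalues i := by
  have hΘ : (0:ℝ) < Θ := hθ.trans hθΘ
  have hsθ : (0:ℝ) < Real.sqrt θ := Real.sqrt_pos.mpr hθ
  have hsθΘ : Real.sqrt θ ≤ Real.sqrt Θ := Real.sqrt_le_sqrt hθΘ.le
  set e : Fin n → ℝ := hM.eigenvalues with hedef
  set U : Matrix (Fin n) (Fin n) ℝ := (hM.eigenvectorUnitary : Matrix (Fin n) (Fin n) ℝ)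
    with hUdef
  have hU1 : star U * U = 1 := mem_unitaryGroup_iff'.mp hM.eigenvectorUnitary.2
  have hU2 : U * star U = 1 := mem_unitaryGroup_iff.mp hM.eigenvectorUnitary.2
  have hspec : M = U * diagonal e * star U := by
    simpa [RCLike.ofReal_real_eq_id] using hM.spectral_theorem
  set R : ℝ := Θ * ∑ i ∈ Finset.univ.filter (fun i => 0 < e i), e i
      + θ * ∑ i ∈ Finset.univ.filter (fun i => e i < 0), e i with hRdef
  set c : Fin n → ℝ := fun i => if 0 < e i then Real.sqrt Θ else Real.sqrt θ with hcdef
  -- the target value as a single sum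
  have hRsum : R = ∑ i, e i * (c i * c i) := by
    have hc2 : ∀ i, c i * c i = if 0 < e i then Θ else θ := by
      intro i
      by_cases h : 0 < e i <;>
        simp [hcdef, h, Real.mul_self_sqrt hθ.le, Real.mul_self_sqrt hΘ.le]
    have : ∀ i, e i * (c i * c i) = if 0 < e i then Θ * e i else θ * e i := by
      intro i; rw [hc2]; by_cases h : 0 < e i <;> simp [h, mul_comm]
    rw [Finset.sum_congr rfl (fun i _ => this i)]
    rw [Finset.sum_ite, ← Finset.mul_sum, ← Finset.mul_sum]
    have hsub : ∑ i ∈ Finset.univ.filter (fun i => ¬ 0 < e i), e i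
        = ∑ i ∈ Finset.univ.filter (fun i => e i < 0), e i := by
      refine (Finset.sum_subset ?_ ?_).symm
      · intro i hi
        simp only [Finset.mem_filter, Finset.mem_univ, true_and] at hi ⊢
        linarith
      · intro i hi hni
        simp only [Finset.mem_filter, Finset.mem_univ, true_and] at hi hni
        linarith
    rw [hsub, hRdef]
  -- the maximizer
  set A₀ : Matrix (Fin n) (Fin n) ℝ := U * diagonal c * star U with hA₀def
  have hA₀herm : A₀.IsHermitian := by
    have := isHermitian_mul_mul_conjTranspose U
      (isHermitian_diagonal c)
    simpa [hA₀def, Matrix.star_eq_conjTranspose] using this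
  have hconjU : ∀ (d : Fin n → ℝ) (a : ℝ),
      U * diagonal d * star U - a • (1 : Matrix (Fin n) (Fin n) ℝ)
        = U * diagonal (fun i => d i - a) * star U := by
    intro d a
    rw [← diag_sub_smul_one, Matrix.mul_sub, Matrix.sub_mul]
    simp [mul_smul_comm, smul_mul_assoc, hU2]
  have hconjU' : ∀ (d : Fin n → ℝ) (a : ℝ),
      a • (1 : Matrix (Fin n) (Fin n) ℝ) - U * diagonal d * star U
        = U * diagonal (fun i => a - d i) * star U := by
    intro d a
    rw [← smul_one_sub_diag, Matrix.mul_sub, Matrix.sub_mul]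
    simp [mul_smul_comm, smul_mul_assoc, hU2]
  have hA₀lo : (A₀ - Real.sqrt θ • (1 : Matrix (Fin n) (Fin n) ℝ)).PosSemidef := by
    rw [hA₀def, hconjU]
    have : PosSemidef (diagonal (fun i => c i - Real.sqrt θ)) := by
      rw [posSemidef_diagonal_iff]
      intro i
      by_cases h : 0 < e i <;> simp [hcdef, h] <;> linarith
    simpa [Matrix.star_eq_conjTranspose] using this.mul_mul_conjTranspose_same U
  have hA₀hi : (Real.sqrt Θ • (1 : Matrix (Fin n) (Fin n) ℝ) - A₀).PosSemidef := by
    rw [hA₀def, hconjU']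
    have : PosSemidef (diagonal (fun i => Real.sqrt Θ - c i)) := by
      rw [posSemidef_diagonal_iff]
      intro i
      by_cases h : 0 < e i <;> simp [hcdef, h] <;> linarith
    simpa [Matrix.star_eq_conjTranspose] using this.mul_mul_conjTranspose_same U
  have hA₀trace : (A₀ᵀ * M * A₀).trace = R := by
    have hA₀T : A₀ᵀ = A₀ := by
      ext i j
      have h := congrFun (congrFun hA₀herm.eq i) j
      simp only [Matrix.conjTranspose_apply, star_trivial] at h
      simpa [Matrix.transpose_apply] using h
    rw [hA₀T, Matrix.trace_mul_cycle]
    have hprod : A₀ * A₀ = U * diagonal (fun i => c i * c i) * star U := by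
      rw [hA₀def, ← diagonal_mul_diagonal]
      simp only [Matrix.mul_assoc]
      rw [← Matrix.mul_assoc (star U) U, hU1, Matrix.one_mul]
    have : A₀ * A₀ * M = U * (diagonal (fun i => c i * c i) * diagonal e) * star U := by
      rw [hprod, hspec]
      simp only [Matrix.mul_assoc]
      rw [← Matrix.mul_assoc (star U) U, hU1, Matrix.one_mul]
    rw [this, diagonal_mul_diagonal, Matrix.trace_mul_cycle,
      hU1, Matrix.one_mul, Matrix.trace_diagonal, hRsum]
    exact Finset.sum_congr rfl fun i _ => by ring
  -- upper bound
  have hub : ∀ x ∈ {x : ℝ | ∃ A : Matrix (Fin n) (Fin n) ℝ, A.IsHermitian ∧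
        (A - Real.sqrt θ • (1 : Matrix (Fin n) (Fin n) ℝ)).PosSemidef ∧
        (Real.sqrt Θ • (1 : Matrix (Fin n) (Fin n) ℝ) - A).PosSemidef ∧
        x = (Aᵀ * M * A).trace}, x ≤ R := by
    rintro x ⟨A, hA, hlo, hhi, rfl⟩
    have hAT : Aᵀ = A := by
      ext i j
      have h := congrFun (congrFun hA.eq i) j
      simp only [Matrix.conjTranspose_apply, star_trivial] at h
      simpa [Matrix.transpose_apply] using h
    obtain ⟨hsqlo, hsqhi⟩ := sq_psd_bounds hA hsθ.le hlo hhi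
    rw [Real.sq_sqrt hθ.le] at hsqlo
    rw [Real.sq_sqrt hΘ.le] at hsqhi
    set B : Matrix (Fin n) (Fin n) ℝ := star U * (A * A) * U with hBdef
    have hBlo : ∀ i, θ ≤ B i i := by
      intro i
      have h1 := hsqlo.conjTranspose_mul_mul_same U
      have h2 : Uᴴ * (A * A - θ • (1 : Matrix (Fin n) (Fin n) ℝ)) * U
          = B - θ • (1 : Matrix (Fin n) (Fin n) ℝ) := by
        show star U * _ * U = _
        rw [Matrix.mul_sub, Matrix.sub_mul, hBdef]
        simp [mul_smul_comm, smul_mul_assoc, hU1]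
      rw [h2] at h1
      have := psd_diag_nonneg h1 i
      simp only [Matrix.sub_apply, Matrix.smul_apply, Matrix.one_apply_eq,
        smul_eq_mul, mul_one] at this
      linarith
    have hBhi : ∀ i, B i i ≤ Θ := by
      intro i
      have h1 := hsqhi.conjTranspose_mul_mul_same U
      have h2 : Uᴴ * (Θ • (1 : Matrix (Fin n) (Fin n) ℝ) - A * A) * U
          = Θ • (1 : Matrix (Fin n) (Fin n) ℝ) - B := by
        show star U * _ * U = _
        rw [Matrix.mul_sub, Matrix.sub_mul, hBdef]
        simp [mul_smul_comm, smul_mul_assoc, hU1]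
      rw [h2] at h1
      have := psd_diag_nonneg h1 i
      simp only [Matrix.sub_apply, Matrix.smul_apply, Matrix.one_apply_eq,
        smul_eq_mul, mul_one] at this
      linarith
    have h3 : diagonal e * B = star U * (M * (A * A)) * U := by
      rw [hspec, hBdef]
      simp only [Matrix.mul_assoc]
      rw [← Matrix.mul_assoc (star U) U, hU1, Matrix.one_mul]
    have htr : (Aᵀ * M * A).trace = ∑ i, e i * B i i := by
      rw [hAT]
      have e1 : (A * M * A).trace = (M * (A * A)).trace := by
        rw [Matrix.trace_mul_cycle, Matrix.trace_mul_comm]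
      have e2 : (M * (A * A)).trace = (diagonal e * B).trace := by
        rw [h3, Matrix.trace_mul_cycle, hU2, Matrix.one_mul]
      rw [e1, e2, Matrix.trace]
      congr 1
      ext i
      simp [Matrix.diag_apply, Matrix.mul_apply, Matrix.diagonal_apply, ite_mul,
        Finset.sum_ite_eq]
    rw [htr, hRsum]
    apply Finset.sum_le_sum
    intro i _
    rcases lt_trichotomy (e i) 0 with h | h | h
    · have hc : c i = Real.sqrt θ := by simp [hcdef, not_lt.mpr h.le, asymm h]
      rw [hc, Real.mul_self_sqrt hθ.le]
      nlinarith [hBlo i]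
    · simp [h]
    · have hc : c i = Real.sqrt Θ := by simp [hcdef, h]
      rw [hc, Real.mul_self_sqrt hΘ.le]
      nlinarith [hBhi i]
  refine IsGreatest.csSup_eq ⟨⟨A₀, hA₀herm, hA₀lo, hA₀hi, hA₀trace.symm⟩, ?_⟩
  intro x hx
  exact hub x hx
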